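/- Let ω be a cyclic de Bruijn word of order n over Σ and let r > n. Then the Kullback–Leibler divergence between the cyclic window distribution ρ_ω^{(r)} and its project–lift rollout equals exactly (r − n)·log₂ s bits. Consequently the universal upper bound L·log₂ s (with L = r − n) on the project–lift KL gap is sharp: it is attained by ρ_ω^{(r)}. -/

import Mathlib

/-!
Project–lift diagnostics.

Fix a finite alphabet `σ` with `s = |σ| ≥ 2` and integers `r > n ≥ 1`; we write
`n = m + 1` (contexts have length `m = n − 1`) and `r = m + 1 + L` (`L = r − n` is the
hidden extra depth; for `r = n` take `L = 0`).  A distribution `ρ` on `Σ^r` is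
shift-stationary at order `≤ n` if all its contiguous length-`n` marginals coincide.
`ngramMarg ρ` is its length-`n` marginal (at offset `0`), `ctxMarg ρ` the induced
length-`(n−1)` marginal, `plContLaw ρ a c = ρ_n(c·a)/ρ_{n−1}(c)` the induced order-`n`
continuation law, and `rollout ρ` the project–lift rollout
`ρ̃(x_1⋯x_r) = ρ_n(x_1⋯x_n) · ∏_{t=n+1}^r p(x_t | x_{t−n+1}⋯x_{t−1})`.
KL divergences are in bits.
-/

open Finset

variable {σ : Type*}

/-- The length-`len` window at offset `t` of a string of length `r = m + 1 + L`. -/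
def win (m L len t : ℕ) (h : t + len ≤ m + 1 + L)
    (x : Fin (m + 1 + L) → σ) : Fin len → σ :=
  fun i => x ⟨t + i.val, by have := i.isLt; omega⟩

/-- The contiguous length-`len` marginal at offset `t` of a distribution on `Σ^r`. -/
noncomputable def marg [Fintype σ] [DecidableEq σ] (m L len t : ℕ)
    (h : t + len ≤ m + 1 + L) (ρ : (Fin (m + 1 + L) → σ) → ℝ)
    (u : Fin len → σ) : ℝ :=
  ∑ x : Fin (m + 1 + L) → σ, if win m L len t h x = u then ρ x else 0

/-- A distribution on sequences: nonnegative and summing to `1`. -/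
def IsDistOn [Fintype σ] [DecidableEq σ] {ι : Type*} [Fintype ι] [DecidableEq ι]
    (ρ : (ι → σ) → ℝ) : Prop :=
  (∀ x, 0 ≤ ρ x) ∧ ∑ x, ρ x = 1

/-- Shift-stationarity at order `≤ n` (`n = m+1`): all contiguous length-`n`
marginals coincide. -/
def ShiftStationary [Fintype σ] [DecidableEq σ] (m L : ℕ)
    (ρ : (Fin (m + 1 + L) → σ) → ℝ) : Prop :=
  ∀ (t₁ t₂ : ℕ) (h₁ : t₁ + (m + 1) ≤ m + 1 + L) (h₂ : t₂ + (m + 1) ≤ m + 1 + L),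
    marg m L (m + 1) t₁ h₁ ρ = marg m L (m + 1) t₂ h₂ ρ

/-- The common length-`n` marginal `ρ_n` (computed at offset `0`). -/
noncomputable def ngramMarg [Fintype σ] [DecidableEq σ] (m L : ℕ)
    (ρ : (Fin (m + 1 + L) → σ) → ℝ) : (Fin (m + 1) → σ) → ℝ :=
  marg m L (m + 1) 0 (by omega) ρ

/-- The induced length-`(n−1)` (context) marginal `ρ_{n−1}`. -/
noncomputable def ctxMarg [Fintype σ] [DecidableEq σ] (m L : ℕ)
    (ρ : (Fin (m + 1 + L) → σ) → ℝ) (c : Fin m → σ) : ℝ :=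
  ∑ a, ngramMarg m L ρ (Fin.snoc c a)

/-- The induced order-`n` continuation law `p(a | c) = ρ_n(c·a)/ρ_{n−1}(c)`. -/
noncomputable def plContLaw [Fintype σ] [DecidableEq σ] (m L : ℕ)
    (ρ : (Fin (m + 1 + L) → σ) → ℝ) (a : σ) (c : Fin m → σ) : ℝ :=
  ngramMarg m L ρ (Fin.snoc c a) / ctxMarg m L ρ c

/-- The project–lift rollout
`ρ̃(x_1⋯x_r) = ρ_n(x_1⋯x_n) · ∏_{t=n+1}^r p(x_t | x_{t−n+1}⋯x_{t−1})`. -/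
noncomputable def rollout [Fintype σ] [DecidableEq σ] (m L : ℕ)
    (ρ : (Fin (m + 1 + L) → σ) → ℝ) : (Fin (m + 1 + L) → σ) → ℝ :=
  fun x =>
    ngramMarg m L ρ (win m L (m + 1) 0 (by omega) x) *
      ∏ t : Fin L,
        plContLaw m L ρ (x ⟨m + 1 + t.val, by have := t.isLt; omega⟩)
          (win m L m (t.val + 1) (by have := t.isLt; omega) x)

/-- Kullback–Leibler divergence in bits (with the convention `0·log 0 = 0`). -/
noncomputable def klBits {X : Type*} [Fintype X] (μ ν : X → ℝ) : ℝ :=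
  ∑ x, μ x * Real.logb 2 (μ x / ν x)

/-- The distribution `ρ_ω^{(r)}` on `Σ^r` (`r = m+1+L`): uniform on the `s^n` cyclic
length-`r` windows of the cyclic word `ω` of length `s^n` (`n = m+1`), one window
starting at each position `i < s^n`. -/
noncomputable def cyclicWindowDist [Fintype σ] [DecidableEq σ] (m L : ℕ)
    (ω : ℕ → σ) : (Fin (m + 1 + L) → σ) → ℝ :=
  fun g =>
    (∑ i ∈ Finset.range (Fintype.card σ ^ (m + 1)),
      if ∀ t : Fin (m + 1 + L), ω (i + (t : ℕ)) = g t then (1 : ℝ) else 0) /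
      (Fintype.card σ ^ (m + 1) : ℝ)

/-- `ω` is a cyclic de Bruijn word of order `n = m+1`: it has period `s^n` and every
`n`-gram appears exactly once among its `s^n` cyclic length-`n` windows. -/
def IsDeBruijnWord [Fintype σ] [DecidableEq σ] (m : ℕ) (ω : ℕ → σ) : Prop :=
  (∀ i, ω (i + Fintype.card σ ^ (m + 1)) = ω i) ∧
  (∀ g : Fin (m + 1) → σ, ∃! i, i < Fintype.card σ ^ (m + 1) ∧
    ∀ t : Fin (m + 1), ω (i + (t : ℕ)) = g t)


/-!
Every `n`-gram occurs exactly once among the `s^n` windows of a de Bruijn word, so the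
window distribution `ρ` has uniform `n`-gram marginal `s^{-n}` and uniform continuation law
`1/s`; its rollout is therefore the uniform distribution `s^{-r}` on `Σ^r`. On the other hand
distinct starting positions give distinct windows, so `ρ` is uniform (`s^{-n}`) on its support,
and the divergence is `log₂ (s^{-n} / s^{-r}) = (r − n) log₂ s`.
-/

section KL

variable {X : Type*} [Fintype X]

theorem klBits_eq_logb_of_uniform {μ ν : X → ℝ} {a b : ℝ}
    (hμ : ∀ x, μ x = 0 ∨ μ x = a) (hμ_sum : ∑ x, μ x = 1) (hν : ∀ x, ν x = b) :
    klBits μ ν = Real.logb 2 (a / b) := by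
  have hterm : ∀ x, μ x * Real.logb 2 (μ x / ν x) = μ x * Real.logb 2 (a / b) := by
    intro x
    rcases hμ x with h | h <;> simp [h, hν]
  simp only [klBits, hterm, ← Finset.sum_mul, hμ_sum, one_mul]

end KL

section Rollout

variable [Fintype σ] [DecidableEq σ] {m L : ℕ} {ρ : (Fin (m + 1 + L) → σ) → ℝ} {p : ℝ}

theorem plContLaw_of_ngramMarg_eq_const (hρ : ∀ u, ngramMarg m L ρ u = p) (hp : p ≠ 0)
    (a : σ) (c : Fin m → σ) :
    plContLaw m L ρ a c = (Fintype.card σ : ℝ)⁻¹ := by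
  simp only [plContLaw, ctxMarg, hρ, Finset.sum_const, Finset.card_univ, nsmul_eq_mul]
  exact div_mul_cancel_right₀ hp _

theorem rollout_of_ngramMarg_eq_const (hρ : ∀ u, ngramMarg m L ρ u = p) (hp : p ≠ 0)
    (x : Fin (m + 1 + L) → σ) :
    rollout m L ρ x = p * (Fintype.card σ : ℝ)⁻¹ ^ L := by
  simp [rollout, hρ, plContLaw_of_ngramMarg_eq_const hρ hp]

end Rollout

section CyclicWindow

def cyclicWindow (ω : ℕ → σ) (r i : ℕ) : Fin r → σ := fun t => ω (i + t)

theorem win_cyclicWindow (ω : ℕ → σ) (m L len t : ℕ) (h : t + len ≤ m + 1 + L) (i : ℕ) :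
    win m L len t h (cyclicWindow ω (m + 1 + L) i) = cyclicWindow ω len (i + t) := by
  funext k
  simp [win, cyclicWindow, add_assoc]

variable [Fintype σ] [DecidableEq σ]

theorem cyclicWindowDist_apply (m L : ℕ) (ω : ℕ → σ) (x : Fin (m + 1 + L) → σ) :
    cyclicWindowDist m L ω x =
      (∑ i ∈ range (Fintype.card σ ^ (m + 1)),
        if cyclicWindow ω (m + 1 + L) i = x then (1 : ℝ) else 0) /
        (Fintype.card σ ^ (m + 1) : ℝ) := by
  simp [cyclicWindowDist, cyclicWindow, funext_iff]

theorem sum_mul_cyclicWindowDist (m L : ℕ) (ω : ℕ → σ) (f : (Fin (m + 1 + L) → σ) → ℝ) :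
    ∑ x, f x * cyclicWindowDist m L ω x =
      (∑ i ∈ range (Fintype.card σ ^ (m + 1)), f (cyclicWindow ω (m + 1 + L) i)) /
        (Fintype.card σ ^ (m + 1) : ℝ) := by
  simp only [cyclicWindowDist_apply, mul_div_assoc', ← Finset.sum_div, Finset.mul_sum]
  rw [Finset.sum_comm]
  simp

theorem sum_cyclicWindowDist (m L : ℕ) (ω : ℕ → σ) (hs : 0 < Fintype.card σ) :
    ∑ x, cyclicWindowDist m L ω x = 1 := by
  have hN : (Fintype.card σ ^ (m + 1) : ℝ) ≠ 0 := by positivity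
  simpa [hN] using sum_mul_cyclicWindowDist m L ω 1

theorem marg_cyclicWindowDist (m L len t : ℕ) (h : t + len ≤ m + 1 + L) (ω : ℕ → σ)
    (u : Fin len → σ) :
    marg m L len t h (cyclicWindowDist m L ω) u =
      (#{i ∈ range (Fintype.card σ ^ (m + 1)) | cyclicWindow ω len (i + t) = u} : ℝ) /
        (Fintype.card σ ^ (m + 1) : ℝ) := by
  have hmarg : marg m L len t h (cyclicWindowDist m L ω) u =
      ∑ x, (if win m L len t h x = u then (1 : ℝ) else 0) * cyclicWindowDist m L ω x := by
    simp only [marg, boole_mul]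
  rw [hmarg, sum_mul_cyclicWindowDist]
  simp [win_cyclicWindow, Finset.sum_boole]

end CyclicWindow

namespace IsDeBruijnWord

variable [Fintype σ] [DecidableEq σ] {m : ℕ} {ω : ℕ → σ}

theorem existsUnique_cyclicWindow_eq (hω : IsDeBruijnWord m ω) (u : Fin (m + 1) → σ) :
    ∃! i, i < Fintype.card σ ^ (m + 1) ∧ cyclicWindow ω (m + 1) i = u := by
  simpa [cyclicWindow, funext_iff] using hω.2 u

theorem card_filter_cyclicWindow_eq (hω : IsDeBruijnWord m ω) (u : Fin (m + 1) → σ) :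
    #{i ∈ range (Fintype.card σ ^ (m + 1)) | cyclicWindow ω (m + 1) i = u} = 1 := by
  obtain ⟨k, hk, hk_unique⟩ := hω.existsUnique_cyclicWindow_eq u
  rw [Finset.card_eq_one]
  refine ⟨k, Finset.ext fun i => ?_⟩
  simp only [Finset.mem_filter, Finset.mem_range, Finset.mem_singleton]
  exact ⟨hk_unique i, fun hi => hi ▸ hk⟩

/-- Two windows of length `r ≥ n` that agree already share their leading `n`-gram. -/
theorem injOn_cyclicWindow (hω : IsDeBruijnWord m ω) (L : ℕ) :
    Set.InjOn (cyclicWindow ω (m + 1 + L)) (Set.Iio (Fintype.card σ ^ (m + 1))) := by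
  intro i hi j hj hij
  have hprefix := congrArg (win m L (m + 1) 0 (by omega)) hij
  simp only [win_cyclicWindow, add_zero] at hprefix
  obtain ⟨k, -, hk_unique⟩ := hω.existsUnique_cyclicWindow_eq (cyclicWindow ω (m + 1) j)
  exact (hk_unique i ⟨hi, hprefix⟩).trans (hk_unique j ⟨hj, rfl⟩).symm

theorem ngramMarg_cyclicWindowDist (hω : IsDeBruijnWord m ω) (L : ℕ) (u : Fin (m + 1) → σ) :
    ngramMarg m L (cyclicWindowDist m L ω) u = ((Fintype.card σ ^ (m + 1) : ℕ) : ℝ)⁻¹ := by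
  rw [ngramMarg, marg_cyclicWindowDist]
  simp [hω.card_filter_cyclicWindow_eq u]

theorem cyclicWindowDist_eq_zero_or_eq (hω : IsDeBruijnWord m ω) (L : ℕ)
    (x : Fin (m + 1 + L) → σ) :
    cyclicWindowDist m L ω x = 0 ∨
      cyclicWindowDist m L ω x = ((Fintype.card σ ^ (m + 1) : ℕ) : ℝ)⁻¹ := by
  have hcard : #{i ∈ range (Fintype.card σ ^ (m + 1)) | cyclicWindow ω (m + 1 + L) i = x} ≤ 1 :=
    Finset.card_le_one.2 fun i hi j hj => by
      simp only [Finset.mem_filter, Finset.mem_range] at hi hj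
      exact hω.injOn_cyclicWindow L hi.1 hj.1 (hi.2.trans hj.2.symm)
  rw [cyclicWindowDist_apply, Finset.sum_boole]
  rcases Nat.le_one_iff_eq_zero_or_eq_one.1 hcard with h | h <;> simp [h]

end IsDeBruijnWord

theorem deBruijn_attains_extremal_kl_general [Fintype σ] [DecidableEq σ]
    (m L : ℕ)
    (ω : ℕ → σ) (hω : IsDeBruijnWord m ω) :
    klBits (cyclicWindowDist m L ω) (rollout m L (cyclicWindowDist m L ω)) =
      (L : ℝ) * Real.logb 2 (Fintype.card σ) := by
  have hs : 0 < Fintype.card σ := Fintype.card_pos_iff.2 ⟨ω 0⟩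
  have hN : ((Fintype.card σ ^ (m + 1) : ℕ) : ℝ)⁻¹ ≠ 0 := by positivity
  rw [klBits_eq_logb_of_uniform (hω.cyclicWindowDist_eq_zero_or_eq L)
    (sum_cyclicWindowDist m L ω hs)
    (rollout_of_ngramMarg_eq_const (hω.ngramMarg_cyclicWindowDist L) hN),
    div_mul_cancel_left₀ hN, inv_pow, inv_inv, Real.logb_pow]

/-- Let `ω` be a cyclic de Bruijn word of order `n = m+1` over `σ`
and let `r = m+1+L > n` (so `L = r − n ≥ 1`).  Then the KL divergence between the
cyclic window distribution `ρ_ω^{(r)}` and its project–lift rollout equals exactly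
`(r − n)·log₂ s` bits.  Consequently the universal upper bound `L·log₂ s` on the
project–lift KL gap is sharp: it is attained by `ρ_ω^{(r)}`. -/
theorem deBruijn_attains_extremal_kl [Fintype σ] [DecidableEq σ]
    (m L : ℕ) (hL : 0 < L) (hs : 2 ≤ Fintype.card σ)
    (ω : ℕ → σ) (hω : IsDeBruijnWord m ω) :
    klBits (cyclicWindowDist m L ω) (rollout m L (cyclicWindowDist m L ω)) =
      (L : ℝ) * Real.logb 2 (Fintype.card σ) :=
  deBruijn_attains_extremal_kl_general m L ω hω
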